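/- arXiv:2203.12364 — 2 statements merged into one kernel-verified Lean document; each statement's English description precedes it below -/
import Mathlib

section
/- Let a > 1, K ≥ 1, n ≥ 1 be integers. The number of primes p ≤ K·n dividing a^n - 1 is at most d(n)·(K·n·log a / log 2)^{1/2} + d(n), where d(n) is the number of divisors of n. -/
/-!
Every prime `p ∤ a` dividing `a ^ n - 1` has `e = ord_p(a) ∣ n`, so it suffices to count, for each
divisor `e` of `n`, the primes `p ≤ N = K n` of order `e`. Fermat gives `e ∣ p - 1`, so there are at
most `N / e + 1` of them; they all divide `a ^ e - 1`, so there are at most `e log a / log 2` of them.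
Hence there are at most `min (N / e) (e log a / log 2) + 1 ≤ √(N log a / log 2) + 1` of them.
-/

open Finset

lemma ZMod.natCast_pow_eq_one_iff_dvd {a p : ℕ} (n : ℕ) (ha : 0 < a) :
    (a : ZMod p) ^ n = 1 ↔ p ∣ a ^ n - 1 := by
  rw [← Nat.modEq_iff_dvd' (Nat.one_le_pow _ _ ha), ← ZMod.natCast_eq_natCast_iff, Nat.cast_pow,
    Nat.cast_one, eq_comm]

lemma ZMod.dvd_sub_one_of_orderOf_eq {a p e : ℕ} [Fact p.Prime] (he : 0 < e)
    (h : orderOf (a : ZMod p) = e) : e ∣ p - 1 := by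
  have ha : (a : ZMod p) ≠ 0 := by
    rintro ha
    simp [ha] at h
    omega
  exact h ▸ ZMod.orderOf_dvd_card_sub_one ha

lemma Nat.card_le_div_add_one_of_dvd_sub_one {s : Finset ℕ} {N e : ℕ}
    (hs : ∀ p ∈ s, 0 < p ∧ p ≤ N ∧ e ∣ p - 1) : #s ≤ N / e + 1 := by
  have hmaps : Set.MapsTo (fun p => (p - 1) / e) s (range (N / e + 1)) := fun p hp => by
    have : (p - 1) / e ≤ N / e := Nat.div_le_div_right (by have := (hs p hp).2.1; omega)
    simpa [Nat.lt_succ_iff] using this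
  have hinj : Set.InjOn (fun p => (p - 1) / e) s := fun p hp q hq hpq => by
    obtain ⟨hp0, -, hpe⟩ := hs p hp
    obtain ⟨hq0, -, hqe⟩ := hs q hq
    have := congrArg (· * e) hpq
    simp only [Nat.div_mul_cancel hpe, Nat.div_mul_cancel hqe] at this
    omega
  simpa using card_le_card_of_injOn _ hmaps hinj

lemma Nat.two_pow_card_le_of_forall_prime_dvd {s : Finset ℕ} {m : ℕ} (hm : m ≠ 0)
    (hs : ∀ p ∈ s, p.Prime ∧ p ∣ m) : 2 ^ #s ≤ m :=
  calc 2 ^ #s ≤ ∏ p ∈ s, p := pow_card_le_prod _ _ _ fun p hp => (hs p hp).1.two_le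
    _ ≤ m := Nat.le_of_dvd (Nat.pos_of_ne_zero hm)
      (prod_primes_dvd m (fun p hp => (hs p hp).1.prime) fun p hp => (hs p hp).2)

lemma Real.natCast_le_mul_log_div_log_two {k a e : ℕ} (h : 2 ^ k ≤ a ^ e) :
    (k : ℝ) ≤ e * Real.log a / Real.log 2 := by
  rw [le_div_iff₀ (Real.log_pos one_lt_two), ← Real.log_pow, ← Real.log_pow]
  exact Real.log_le_log (by positivity) (by exact_mod_cast h)

lemma Real.min_le_sqrt_mul {x y : ℝ} (hx : 0 ≤ x) (hy : 0 ≤ y) : min x y ≤ √(x * y) := by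
  rw [Real.le_sqrt (le_min hx hy) (mul_nonneg hx hy), sq]
  exact mul_le_mul (min_le_left x y) (min_le_right x y) (le_min hx hy) hx

section OrderOf

variable {s : Finset ℕ} {a e : ℕ}

lemma card_le_div_add_one_of_forall_orderOf_eq {N : ℕ} (he : 0 < e)
    (hs : ∀ p ∈ s, p.Prime ∧ p ≤ N ∧ orderOf (a : ZMod p) = e) : #s ≤ N / e + 1 :=
  Nat.card_le_div_add_one_of_dvd_sub_one fun p hp => by
    obtain ⟨hp, hpN, hord⟩ := hs p hp
    have := Fact.mk hp
    exact ⟨hp.pos, hpN, ZMod.dvd_sub_one_of_orderOf_eq he hord⟩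

lemma two_pow_card_le_of_forall_orderOf_eq (ha : 1 < a) (he : 0 < e)
    (hs : ∀ p ∈ s, p.Prime ∧ orderOf (a : ZMod p) = e) : 2 ^ #s ≤ a ^ e := by
  have hae : a ≤ a ^ e := Nat.le_self_pow he.ne' a
  refine (Nat.two_pow_card_le_of_forall_prime_dvd (m := a ^ e - 1) (by omega) fun p hp => ?_).trans
    (Nat.sub_le _ _)
  obtain ⟨hp, hord⟩ := hs p hp
  exact ⟨hp, (ZMod.natCast_pow_eq_one_iff_dvd e (by omega)).1 (hord ▸ pow_orderOf_eq_one _)⟩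

lemma card_le_sqrt_of_forall_orderOf_eq {N : ℕ} (ha : 1 < a) (he : 0 < e)
    (hs : ∀ p ∈ s, p.Prime ∧ p ≤ N ∧ orderOf (a : ZMod p) = e) :
    (#s : ℝ) ≤ √(N * Real.log a / Real.log 2) + 1 := by
  have hdiv : (#s : ℝ) ≤ N / e + 1 :=
    calc (#s : ℝ) ≤ (N / e : ℕ) + 1 := by exact_mod_cast card_le_div_add_one_of_forall_orderOf_eq he hs
      _ ≤ N / e + 1 := by gcongr; exact Nat.cast_div_le
  have hlog : (#s : ℝ) ≤ e * Real.log a / Real.log 2 :=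
    Real.natCast_le_mul_log_div_log_two <| two_pow_card_le_of_forall_orderOf_eq ha he
      fun p hp => ⟨(hs p hp).1, (hs p hp).2.2⟩
  have hlog_nonneg : 0 ≤ e * Real.log a / Real.log 2 :=
    div_nonneg (mul_nonneg e.cast_nonneg (Real.log_natCast_nonneg a)) (Real.log_nonneg one_le_two)
  have hprod : (N / e : ℝ) * (e * Real.log a / Real.log 2) = N * Real.log a / Real.log 2 := by
    field_simp
  calc (#s : ℝ) ≤ min (N / e : ℝ) (e * Real.log a / Real.log 2) + 1 := by
        rw [← min_add_add_right]; exact le_min hdiv (by linarith)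
    _ ≤ √(N * Real.log a / Real.log 2) + 1 := by
        rw [← hprod]; gcongr; exact Real.min_le_sqrt_mul (by positivity) hlog_nonneg

end OrderOf

theorem card_primes_le_dividing_pow_sub_one_general
    (a K n : ℕ) (ha : 1 < a) :
    (((Finset.range (K * n + 1)).filter
        (fun p => p.Prime ∧ p ∣ a ^ n - 1)).card : ℝ) ≤
      (n.divisors.card : ℝ) * Real.sqrt ((K * n : ℝ) * Real.log a / Real.log 2)
        + (n.divisors.card : ℝ) := by
  set S := (range (K * n + 1)).filter (fun p => p.Prime ∧ p ∣ a ^ n - 1)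
  have hmem : ∀ p ∈ S, p.Prime ∧ p ≤ K * n ∧ orderOf (a : ZMod p) ∈ n.divisors := by
    intro p hp
    obtain ⟨hpN, hprime, hdvd⟩ := by simpa only [S, mem_filter, mem_range] using hp
    have hn : n ≠ 0 := by rintro rfl; have := hprime.two_le; omega
    exact ⟨hprime, by omega, Nat.mem_divisors.2 ⟨orderOf_dvd_of_pow_eq_one
      ((ZMod.natCast_pow_eq_one_iff_dvd n (by omega)).2 hdvd), hn⟩⟩
  rw [card_eq_sum_card_fiberwise fun p hp => (hmem p hp).2.2, Nat.cast_sum]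
  calc ∑ e ∈ n.divisors, (#(S.filter fun p => orderOf (a : ZMod p) = e) : ℝ)
      ≤ ∑ _e ∈ n.divisors, (√((K * n : ℕ) * Real.log a / Real.log 2) + 1) :=
        sum_le_sum fun e he => card_le_sqrt_of_forall_orderOf_eq ha (Nat.pos_of_mem_divisors he)
          fun p hp => by
            obtain ⟨hpS, hord⟩ := mem_filter.1 hp
            exact ⟨(hmem p hpS).1, (hmem p hpS).2.1, hord⟩
    _ = _ := by rw [sum_const, nsmul_eq_mul]; push_cast; ring

theorem card_primes_le_dividing_pow_sub_one
    (a K n : ℕ) (ha : 1 < a) (hK : 1 ≤ K) (hn : 1 ≤ n) :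
    (((Finset.range (K * n + 1)).filter
        (fun p => p.Prime ∧ p ∣ a ^ n - 1)).card : ℝ) ≤
      (n.divisors.card : ℝ) * Real.sqrt ((K * n : ℝ) * Real.log a / Real.log 2)
        + (n.divisors.card : ℝ) :=
  card_primes_le_dividing_pow_sub_one_general a K n ha
end

section
/- Let a > 1 be an integer, c > 1 a real number, K ≥ 1, and set u_n = a^n - 1. Then the number of integers n ∈ (N/2, N] with s_{Kn}(u_n) > c^n is O_{a,c,K}(N / log N). -/
/-- The `y`-smooth part of `m` : the largest divisor of `m` all of whose
prime factors are at most `y`. -/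
noncomputable def smoothPart (y : ℝ) (m : ℕ) : ℕ :=
  ∏ p ∈ m.primeFactors, p ^ (if (p : ℝ) ≤ y then m.factorization p else 0)

/-!
If `c ^ n < s_{Kn}(a ^ n - 1)` for some `n ∈ (N/2, N]`, then `log s_{KN}(a ^ n - 1) ≥ (N/2) log c`,
so the number of such `n` is at most `2 / (N log c)` times
`∑_{n ≤ N} log s_{KN}(a ^ n - 1) = ∑_{p ≤ KN} log p ∑_{n ≤ N} v_p(a ^ n - 1)`.
If `d` is the order of `a` modulo `p`, then `v_p(a ^ n - 1)` vanishes unless `d ∣ n`, and by lifting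
the exponent `v_p(a ^ n - 1) ≤ v_p(a ^ {2d} - 1) + v_p(n)` when `d ∣ n`. Hence each inner sum is at
most `(N / d) · 2d log a + v_p(N!) log p ≤ 3 N log a`, and Chebyshev's bound `π(KN) ≪ KN / log N`
gives the claim.
-/

open Finset Real
open scoped Nat

lemma padicValNat_le_of_dvd {p m n : ℕ} [Fact p.Prime] (hn : n ≠ 0) (h : m ∣ n) :
    padicValNat p m ≤ padicValNat p n := by
  rcases eq_or_ne m 0 with rfl | hm
  · simp
  exact (padicValNat_dvd_iff_le hn).1 (pow_padicValNat_dvd.trans h)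

lemma padicValNat_pow_sub_one_le {p b m : ℕ} [hp : Fact p.Prime] (hb : 1 < b)
    (hpb : p ∣ b - 1) (hm : m ≠ 0) :
    padicValNat p (b ^ m - 1) ≤ padicValNat p (b ^ 2 - 1) + padicValNat p m := by
  have hpb' : ¬ p ∣ b := fun h ↦ hp.out.one_lt.ne'
    (Nat.dvd_one.mp (by simpa [Nat.sub_sub_self hb.le] using Nat.dvd_sub h hpb))
  rcases hp.out.eq_two_or_odd' with rfl | hodd
  · -- For `p = 2` lifting the exponent needs an even exponent, so pass through `b ^ (2 * m) - 1`.
    have hsq : padicValNat 2 (b ^ 2 - 1) = padicValNat 2 (b + 1) + padicValNat 2 (b - 1) := by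
      rw [← padicValNat.mul (by omega) (by omega), ← Nat.sq_sub_sq, one_pow]
    have hlte := padicValNat.pow_two_sub_one hb hpb' (mul_ne_zero two_ne_zero hm)
      (even_two_mul m)
    have hdvd : b ^ m - 1 ∣ b ^ (2 * m) - 1 := by
      simpa [← pow_mul, mul_comm m 2] using Nat.sub_dvd_pow_sub_pow (b ^ m) 1 2
    have hmono := padicValNat_le_of_dvd (p := 2)
      (Nat.sub_ne_zero_of_lt (Nat.one_lt_pow (mul_ne_zero two_ne_zero hm) hb)) hdvd
    rw [padicValNat.mul two_ne_zero hm, padicValNat_self] at hlte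
    omega
  · have hlte := padicValNat.pow_sub_pow hodd hb (by simpa using hpb) hpb' hm
    have hmono : padicValNat p (b - 1) ≤ padicValNat p (b ^ 2 - 1) :=
      padicValNat_le_of_dvd (Nat.sub_ne_zero_of_lt (Nat.one_lt_pow two_ne_zero hb))
        (by simpa using Nat.sub_dvd_pow_sub_pow b 1 2)
    rw [one_pow] at hlte
    omega

lemma dvd_pow_sub_one_iff_orderOf_dvd {p a n : ℕ} (ha : a ≠ 0) :
    p ∣ a ^ n - 1 ↔ orderOf (a : ZMod p) ∣ n := by
  rw [← ZMod.natCast_eq_zero_iff, Nat.cast_sub (Nat.one_le_pow _ _ (Nat.pos_of_ne_zero ha)),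
    orderOf_dvd_iff_pow_eq_one]
  push_cast
  exact sub_eq_zero

lemma padicValNat_pow_sub_one_le_ite {p a n : ℕ} [Fact p.Prime] (ha : 1 < a) (hn : n ≠ 0) :
    padicValNat p (a ^ n - 1) ≤
      (if orderOf (a : ZMod p) ∣ n then padicValNat p (a ^ (2 * orderOf (a : ZMod p)) - 1)
        else 0) + padicValNat p n := by
  set d := orderOf (a : ZMod p)
  split_ifs with hd
  · obtain ⟨m, rfl⟩ := hd
    have hm : m ≠ 0 := right_ne_zero_of_mul hn
    have hb : 1 < a ^ d := Nat.one_lt_pow (left_ne_zero_of_mul hn) ha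
    have hpb : p ∣ a ^ d - 1 := (dvd_pow_sub_one_iff_orderOf_dvd (by omega)).2 dvd_rfl
    rw [pow_mul, mul_comm 2, pow_mul]
    have hvm := padicValNat_le_of_dvd (p := p) hn (dvd_mul_left m d)
    have hlte := padicValNat_pow_sub_one_le hb hpb hm
    omega
  · rw [padicValNat.eq_zero_of_not_dvd (mt (dvd_pow_sub_one_iff_orderOf_dvd (by omega)).1 hd)]
    omega

lemma sum_Ioc_padicValNat_eq_factorial (p N : ℕ) [Fact p.Prime] :
    ∑ n ∈ Ioc 0 N, padicValNat p n = padicValNat p N ! := by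
  induction N with
  | zero => simp
  | succ N ih =>
    rw [sum_Ioc_succ_top (Nat.zero_le N), ih, Nat.factorial_succ,
      padicValNat.mul (Nat.succ_ne_zero N) (Nat.factorial_ne_zero N), add_comm]

lemma padicValNat_mul_log_le_log (p : ℕ) [hp : Fact p.Prime] {n : ℕ} (hn : n ≠ 0) :
    (padicValNat p n : ℝ) * log p ≤ log n := by
  have hp0 := hp.out.pos
  rw [← Real.log_pow, ← Nat.cast_pow]
  exact Real.log_le_log (by positivity)
    (by exact_mod_cast Nat.le_of_dvd (Nat.pos_of_ne_zero hn) pow_padicValNat_dvd)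

lemma log_le_sub_one_mul_log_two (p : ℕ) (hp : 1 ≤ p) : log p ≤ (p - 1 : ℝ) * log 2 := by
  have : (p : ℝ) ≤ 2 ^ (p - 1) := by
    have := Nat.lt_two_pow_self (n := p - 1)
    exact_mod_cast (show p ≤ 2 ^ (p - 1) by omega)
  calc log p ≤ log ((2 : ℝ) ^ (p - 1)) := Real.log_le_log (by positivity) this
    _ = (p - 1 : ℝ) * log 2 := by rw [Real.log_pow, Nat.cast_sub hp, Nat.cast_one]

lemma padicValNat_factorial_mul_log_le (p N : ℕ) [hp : Fact p.Prime] :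
    (padicValNat p N ! : ℝ) * log p ≤ N * log 2 := by
  have hp1 := hp.out.one_le
  have hlegendre : ((p - 1 : ℕ) : ℝ) * padicValNat p N ! ≤ N := by
    rw [← Nat.cast_mul, sub_one_mul_padicValNat_factorial]
    exact_mod_cast Nat.sub_le _ _
  rw [Nat.cast_sub hp1, Nat.cast_one] at hlegendre
  calc (padicValNat p N ! : ℝ) * log p ≤ padicValNat p N ! * ((p - 1 : ℝ) * log 2) := by
        gcongr; exact log_le_sub_one_mul_log_two p hp1
    _ = ((p - 1 : ℝ) * padicValNat p N !) * log 2 := by ring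
    _ ≤ N * log 2 := by gcongr

lemma sum_padicValNat_pow_sub_one_mul_log_le (p : ℕ) [hp : Fact p.Prime] {a : ℕ} (ha : 1 < a)
    (N : ℕ) : (∑ n ∈ Ioc 0 N, (padicValNat p (a ^ n - 1) : ℝ)) * log p ≤ 3 * N * log a := by
  set d := orderOf (a : ZMod p)
  set V := padicValNat p (a ^ (2 * d) - 1)
  have hsum : ∑ n ∈ Ioc 0 N, padicValNat p (a ^ n - 1) ≤ N / d * V + padicValNat p N ! := by
    calc _ ≤ ∑ n ∈ Ioc 0 N, ((if d ∣ n then V else 0) + padicValNat p n) :=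
          sum_le_sum fun n hn ↦ padicValNat_pow_sub_one_le_ite ha (by simp at hn; omega)
      _ = N / d * V + padicValNat p N ! := by
          rw [sum_add_distrib, sum_Ioc_padicValNat_eq_factorial, ← sum_filter, sum_const,
            Nat.Ioc_filter_dvd_card_eq_div, smul_eq_mul]
  have hV : (V : ℝ) * log p ≤ 2 * d * log a := by
    rcases Nat.eq_zero_or_pos d with hd | hd
    · simp [V, hd]
    have ha' : (1 : ℝ) < a ^ (2 * d) := one_lt_pow₀ (by exact_mod_cast ha) (by omega)
    calc (V : ℝ) * log p ≤ log ((a ^ (2 * d) - 1 : ℕ) : ℝ) :=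
          padicValNat_mul_log_le_log p (Nat.sub_ne_zero_of_lt (Nat.one_lt_pow (by omega) ha))
      _ ≤ log ((a : ℝ) ^ (2 * d)) := by
          rw [Nat.cast_sub (Nat.one_le_pow _ _ (by omega))]
          push_cast
          exact Real.log_le_log (by linarith) (by linarith)
      _ = 2 * d * log a := by rw [Real.log_pow]; push_cast; ring
  have hdiv : ((N / d : ℕ) : ℝ) * d ≤ N := by exact_mod_cast Nat.div_mul_le_self N d
  have hlog2 : log 2 ≤ log a := Real.log_le_log two_pos (by exact_mod_cast ha)
  calc (∑ n ∈ Ioc 0 N, (padicValNat p (a ^ n - 1) : ℝ)) * log p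
      ≤ ((N / d * V + padicValNat p N ! : ℕ) : ℝ) * log p := by
        have := Real.log_nonneg (by exact_mod_cast hp.out.one_le : (1 : ℝ) ≤ p)
        gcongr
        exact_mod_cast hsum
    _ = ((N / d : ℕ) : ℝ) * (V * log p) + padicValNat p N ! * log p := by push_cast; ring
    _ ≤ ((N / d : ℕ) : ℝ) * (2 * d * log a) + N * log 2 :=
        add_le_add (mul_le_mul_of_nonneg_left hV (by positivity))
          (padicValNat_factorial_mul_log_le p N)
    _ = 2 * (((N / d : ℕ) : ℝ) * d) * log a + N * log 2 := by ring
    _ ≤ 2 * N * log a + N * log a := by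
        have := Real.log_nonneg (by exact_mod_cast ha.le : (1 : ℝ) ≤ a)
        gcongr
    _ = 3 * N * log a := by ring

lemma smoothPart_pos (y : ℝ) (m : ℕ) : 0 < smoothPart y m :=
  prod_pos fun _ hp ↦ pow_pos (Nat.prime_of_mem_primeFactors hp).pos _

lemma smoothPart_le_prod_primesLE {y : ℝ} {M : ℕ} (hy : ⌊y⌋₊ ≤ M) (m : ℕ) :
    smoothPart y m ≤ ∏ p ∈ Nat.primesLE M, p ^ padicValNat p m := by
  have hfilter :
      smoothPart y m = ∏ p ∈ m.primeFactors with ((p : ℕ) : ℝ) ≤ y, p ^ padicValNat p m := by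
    rw [smoothPart, prod_filter]
    refine prod_congr rfl fun p hp ↦ ?_
    rw [Nat.factorization_def m (Nat.prime_of_mem_primeFactors hp)]
    split_ifs <;> simp
  rw [hfilter]
  refine prod_le_prod_of_subset_of_one_le' (fun p hp ↦ ?_) fun p hp _ ↦
    Nat.one_le_pow _ _ (Nat.prime_of_mem_primesLE hp).pos
  simp only [mem_filter, Nat.mem_primeFactors] at hp
  exact Nat.mem_primesLE.2 ⟨(Nat.le_floor hp.2).trans hy, hp.1.1⟩

lemma log_smoothPart_le {y : ℝ} {M : ℕ} (hy : ⌊y⌋₊ ≤ M) (m : ℕ) :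
    log (smoothPart y m) ≤ ∑ p ∈ Nat.primesLE M, (padicValNat p m : ℝ) * log p := by
  calc log (smoothPart y m) ≤ log (∏ p ∈ Nat.primesLE M, (p : ℝ) ^ padicValNat p m) :=
        Real.log_le_log (by exact_mod_cast smoothPart_pos y m)
          (by exact_mod_cast smoothPart_le_prod_primesLE hy m)
    _ = ∑ p ∈ Nat.primesLE M, (padicValNat p m : ℝ) * log p := by
        rw [Real.log_prod fun p hp ↦
          pow_ne_zero _ (by exact_mod_cast (Nat.prime_of_mem_primesLE hp).ne_zero)]
        simp only [Real.log_pow]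

lemma sum_log_smoothPart_pow_sub_one_le {a : ℕ} (ha : 1 < a) (y : ℕ → ℝ) {M : ℕ} (N : ℕ)
    (hy : ∀ n ≤ N, ⌊y n⌋₊ ≤ M) :
    ∑ n ∈ Ioc 0 N, log (smoothPart (y n) (a ^ n - 1)) ≤ M.primeCounting * (3 * N * log a) := by
  calc ∑ n ∈ Ioc 0 N, log (smoothPart (y n) (a ^ n - 1))
      ≤ ∑ n ∈ Ioc 0 N, ∑ p ∈ Nat.primesLE M, (padicValNat p (a ^ n - 1) : ℝ) * log p :=
        sum_le_sum fun n hn ↦ log_smoothPart_le (hy n (mem_Ioc.1 hn).2) _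
    _ = ∑ p ∈ Nat.primesLE M, (∑ n ∈ Ioc 0 N, (padicValNat p (a ^ n - 1) : ℝ)) * log p := by
        rw [sum_comm]
        simp only [sum_mul]
    _ ≤ ∑ p ∈ Nat.primesLE M, 3 * N * log a := sum_le_sum fun p hp ↦
        have : Fact p.Prime := ⟨Nat.prime_of_mem_primesLE hp⟩
        sum_padicValNat_pow_sub_one_mul_log_le p ha N
    _ = M.primeCounting * (3 * N * log a) := by
        rw [sum_const, Nat.primesLE_card_eq_primeCounting, nsmul_eq_mul]

lemma primeCounting_floor_le_mul_div_log {x : ℝ} (hx : 1 < x) :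
    (⌊x⌋₊.primeCounting : ℝ) ≤ 8 * x / log x := by
  have hlog : 0 < log x := Real.log_pos hx
  have hsqrt : 0 < √x := by positivity
  have hlog_sqrt : log √x = log x / 2 := by rw [Real.log_sqrt (by linarith)]
  have hlog4 : log 4 ≤ 3 := by linarith [Real.log_le_sub_one_of_pos (by norm_num : (0 : ℝ) < 4)]
  have hlog_le : log x ≤ 2 * √x := by
    have := Real.log_le_sub_one_of_pos hsqrt
    linarith
  have hsqrt_le : √x ≤ 2 * x / log x := by
    rw [le_div_iff₀ hlog]
    nlinarith [Real.mul_self_sqrt (by linarith : 0 ≤ x)]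
  calc (⌊x⌋₊.primeCounting : ℝ) ≤ log 4 * x / log √x + √x := Chebyshev.pi_le_log4_mul_div hx
    _ ≤ 3 * x / (log x / 2) + 2 * x / log x := by rw [hlog_sqrt]; gcongr
    _ = 8 * x / log x := by field_simp; ring

lemma card_pow_lt_smoothPart_mul_le {a : ℕ} (ha : 1 < a) {c : ℝ} (hc : 1 ≤ c) {K N : ℝ}
    (hK : 0 ≤ K) (hN : 0 ≤ N) :
    (((Ioc ⌊N / 2⌋₊ ⌊N⌋₊).filter
        (fun n : ℕ ↦ c ^ n < (smoothPart (K * n) (a ^ n - 1) : ℝ))).card : ℝ) *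
        (N / 2 * log c) ≤ (⌊K * N⌋₊.primeCounting : ℝ) * (3 * N * log a) := by
  set E := (Ioc ⌊N / 2⌋₊ ⌊N⌋₊).filter (fun n : ℕ ↦ c ^ n < (smoothPart (K * n) (a ^ n - 1) : ℝ))
  have hlog_nonneg : ∀ n : ℕ, 0 ≤ log (smoothPart (K * n) (a ^ n - 1)) := fun n ↦
    Real.log_nonneg (by exact_mod_cast smoothPart_pos _ _)
  have hlarge : ∀ n ∈ E, N / 2 * log c ≤ log (smoothPart (K * n) (a ^ n - 1)) := by
    intro n hn
    obtain ⟨hnI, hn⟩ := mem_filter.1 hn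
    have hNn : N / 2 ≤ n :=
      (Nat.lt_floor_add_one _).le.trans (by exact_mod_cast (mem_Ioc.1 hnI).1)
    calc N / 2 * log c ≤ n * log c := by gcongr; exact Real.log_nonneg hc
      _ = log (c ^ n) := (Real.log_pow c n).symm
      _ ≤ log (smoothPart (K * n) (a ^ n - 1)) :=
          Real.log_le_log (by positivity) hn.le
  have hE : E ⊆ Ioc 0 ⌊N⌋₊ := fun n hn ↦
    Ioc_subset_Ioc_left (Nat.zero_le _) (mem_filter.1 hn).1
  have hy : ∀ n ≤ ⌊N⌋₊, ⌊K * n⌋₊ ≤ ⌊K * N⌋₊ := fun n hn ↦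
    Nat.floor_le_floor (by gcongr; exact (Nat.cast_le.2 hn).trans (Nat.floor_le hN))
  calc (#E : ℝ) * (N / 2 * log c) ≤ ∑ n ∈ E, log (smoothPart (K * n) (a ^ n - 1)) := by
        rw [← nsmul_eq_mul]; exact card_nsmul_le_sum _ _ _ hlarge
    _ ≤ ∑ n ∈ Ioc 0 ⌊N⌋₊, log (smoothPart (K * n) (a ^ n - 1)) :=
        sum_le_sum_of_subset_of_nonneg hE fun n _ _ ↦ hlog_nonneg n
    _ ≤ (⌊K * N⌋₊.primeCounting : ℝ) * (3 * ⌊N⌋₊ * log a) :=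
        sum_log_smoothPart_pow_sub_one_le ha _ _ hy
    _ ≤ (⌊K * N⌋₊.primeCounting : ℝ) * (3 * N * log a) := by
        have := Real.log_nonneg (by exact_mod_cast ha.le : (1 : ℝ) ≤ a)
        gcongr
        exact Nat.floor_le hN

theorem card_smooth_exceptional_interval
    (a : ℕ) (ha : 1 < a) (c : ℝ) (hc : 1 < c) (K : ℝ) (hK : 1 ≤ K) :
    ∃ C > 0, ∀ N : ℝ, 2 ≤ N →
      (((Finset.Ioc ⌊N / 2⌋₊ ⌊N⌋₊).filter
          (fun n : ℕ => (c : ℝ) ^ n < (smoothPart (K * (n : ℝ)) (a ^ n - 1) : ℝ))).card : ℝ) ≤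
        C * N / Real.log N := by
  have hlogc : 0 < log c := Real.log_pos hc
  have hloga : 0 < log a := Real.log_pos (by exact_mod_cast ha)
  refine ⟨48 * K * log a / log c, by positivity, fun N hN ↦ ?_⟩
  have hlogN : 0 < log N := Real.log_pos (by linarith)
  have hpi : (⌊K * N⌋₊.primeCounting : ℝ) ≤ 8 * K * N / log N :=
    calc _ ≤ 8 * (K * N) / log (K * N) := primeCounting_floor_le_mul_div_log (by nlinarith)
      _ ≤ 8 * K * N / log N := by
          rw [← mul_assoc]
          gcongr
          nlinarith
  have hcard := card_pow_lt_smoothPart_mul_le (K := K) (N := N) ha hc.le (by linarith) (by linarith)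
  calc _ ≤ ⌊K * N⌋₊.primeCounting * (3 * N * log a) / (N / 2 * log c) :=
        (le_div_iff₀ (by positivity)).2 hcard
    _ ≤ 8 * K * N / log N * (3 * N * log a) / (N / 2 * log c) := by gcongr
    _ = 48 * K * log a / log c * N / log N := by field_simp; ring
end
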